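/- Let d ≥ 2, R > 0 and let λ be an R-admissible parameter; set J := ⋂_{n≥0} 𝓜_n. Then for every x ∈ J: (i) the connected component of x in J equals ⋂_{n≥0} C_n, where C_n denotes the connected component of x in 𝓜_n; (ii) the first projection π maps the connected component of x in J onto the whole circle S¹. -/

import Mathlib

noncomputable section

/-- The parameter space `ℂ^{D_d}` with the Euclidean norm, indexed by the pairs
`(j,k)` with `0 ≤ j ≤ d-2` and `0 ≤ k ≤ d-j` (so of dimension `D_d = (d-1)(d+4)/2`). -/
abbrev Param (d : ℕ) := EuclideanSpace ℂ (Σ j : Fin (d - 1), Fin (d - (j : ℕ) + 1))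

/-- The fiber polynomial `q_{λ,z}(w) = w^d + Σ_{j=0}^{d-2} (Σ_{k=0}^{d-j} a_{j,k}^{d-j} z^k) w^j`. -/
def qpoly (d : ℕ) (lam : Param d) (z w : ℂ) : ℂ :=
  w ^ d + ∑ j : Fin (d - 1),
    (∑ k : Fin (d - (j : ℕ) + 1), lam ⟨j, k⟩ ^ (d - (j : ℕ)) * z ^ (k : ℕ)) * w ^ (j : ℕ)

/-- Non-autonomous fiberwise iterates along the base `p(z) = z^d`:
`Q⁰ = id`, `Q^{n+1}_{λ,z} = q_{λ, z^{d^n}} ∘ Q^n_{λ,z}`. -/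
def Qit (d : ℕ) (lam : Param d) (z : ℂ) : ℕ → ℂ → ℂ
  | 0, w => w
  | n + 1, w => qpoly d lam (z ^ d ^ n) (Qit d lam z n w)

/-- `R_λ = Σ_{j=0}^{d-2} (Σ_{k=0}^{d-j} |a_{j,k}|^{d-j})^{1/(d-j)}` (real powers). -/
def Rlam (d : ℕ) (lam : Param d) : ℝ :=
  ∑ j : Fin (d - 1),
    (∑ k : Fin (d - (j : ℕ) + 1), ‖lam ⟨j, k⟩‖ ^ (d - (j : ℕ))) ^ (((d - (j : ℕ) : ℕ) : ℝ))⁻¹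

/-- The regular polynomial skew-product `f_λ(z,w) = (z^d, q_{λ,z}(w))`. -/
def fmap (d : ℕ) (lam : Param d) (p : ℂ × ℂ) : ℂ × ℂ := (p.1 ^ d, qpoly d lam p.1 p.2)

/-- The fiberwise critical set over the unit circle. -/
def CritSet (d : ℕ) (lam : Param d) : Set (ℂ × ℂ) :=
  {p | ‖p.1‖ = 1 ∧ deriv (qpoly d lam p.1) p.2 = 0}

/-- The postcritical set `⋃_{n ≥ 1} f_λ^n(C_λ)`. -/
def PostCrit (d : ℕ) (lam : Param d) : Set (ℂ × ℂ) :=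
  ⋃ n ∈ {n : ℕ | 1 ≤ n}, (fmap d lam)^[n] '' CritSet d lam

/-- `𝓜 = S¹ × 𝔻_R`. -/
def Mset (R : ℝ) : Set (ℂ × ℂ) := {p | ‖p.1‖ = 1 ∧ ‖p.2‖ < R}

/-- `𝓜_n = f_λ^{-n}(𝓜)`. -/
def MsetN (d : ℕ) (lam : Param d) (R : ℝ) (n : ℕ) : Set (ℂ × ℂ) :=
  (fmap d lam)^[n] ⁻¹' Mset R

/-- The Julia set `J(f_λ) = {(z,w) : |z| = 1, (Q^n_{λ,z}(w))_n bounded}`. -/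
def Julia (d : ℕ) (lam : Param d) : Set (ℂ × ℂ) :=
  {p | ‖p.1‖ = 1 ∧
    Bornology.IsBounded (Set.range fun n => Qit d lam p.1 n p.2)}

/-- `λ` is `R`-admissible: nested compact preimages, `f_λ : 𝓜₁ → 𝓜` is a `d²`-fold
covering map, and `⋂ 𝓜_n = J(f_λ)`. -/
def Admissible (d : ℕ) (lam : Param d) (R : ℝ) : Prop :=
  (∀ n : ℕ, IsCompact (closure (MsetN d lam R (n + 1))) ∧
    closure (MsetN d lam R (n + 1)) ⊆ MsetN d lam R n) ∧
  (IsCoveringMapOn (fmap d lam) (Mset R) ∧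
    ∀ p ∈ Mset R, (fmap d lam ⁻¹' {p}).ncard = d ^ 2) ∧
  (⋂ n : ℕ, MsetN d lam R n) = Julia d lam

open Set Topology Filter

theorem liftOn_Icc {E X : Type*} [TopologicalSpace E] [TopologicalSpace X]
    {f : E → X} {s : Set X} (hf : IsCoveringMapOn f s) {γ : ℝ → X}
    (hγ : ContinuousOn γ (Icc 0 1)) (hγs : ∀ t ∈ Icc (0:ℝ) 1, γ t ∈ s)
    (e₀ : E) (he₀ : f e₀ = γ 0) :
    ∃ Γ : ℝ → E, ContinuousOn Γ (Icc 0 1) ∧ Γ 0 = e₀ ∧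
      ∀ t ∈ Icc (0:ℝ) 1, f (Γ t) = γ t := by
  classical
  set T : Set ℝ := {t | t ∈ Icc (0:ℝ) 1 ∧ ∃ Γ : ℝ → E, ContinuousOn Γ (Icc 0 t) ∧ Γ 0 = e₀ ∧
      ∀ u ∈ Icc (0:ℝ) t, f (Γ u) = γ u} with hTdef
  have h0T : (0:ℝ) ∈ T := by
    refine ⟨⟨le_refl 0, zero_le_one⟩, fun _ => e₀, continuousOn_const, rfl, ?_⟩
    intro u hu
    have : u = 0 := le_antisymm hu.2 hu.1
    rw [this]; exact he₀
  have hTsub : T ⊆ Icc (0:ℝ) 1 := fun t ht => ht.1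
  have hbdd : BddAbove T := ⟨1, fun t ht => (hTsub ht).2⟩
  have hne : T.Nonempty := ⟨0, h0T⟩
  set u := sSup T with hu
  have hu0 : (0:ℝ) ≤ u := le_csSup hbdd h0T
  have hu1 : u ≤ 1 := csSup_le hne fun t ht => (hTsub ht).2
  have huI : u ∈ Icc (0:ℝ) 1 := ⟨hu0, hu1⟩
  have ec := hf (γ u) (hγs u huI)
  haveI : Nonempty (f ⁻¹' {γ u}) := by
    by_contra hI
    obtain ⟨U, hxU, hU, _, H, _⟩ := ec.2
    have hUn : γ ⁻¹' U ∈ 𝓝[Icc (0:ℝ) 1] u := (hγ u huI) (hU.mem_nhds hxU)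
    obtain ⟨ε, hεpos, hε⟩ := Metric.mem_nhdsWithin_iff.mp hUn
    obtain ⟨t', ht'T, ht'gt⟩ := exists_lt_of_lt_csSup hne (by linarith : u - ε < u)
    have ht'le : t' ≤ u := le_csSup hbdd ht'T
    obtain ⟨ht'I, Γ, -, -, hΓf⟩ := ht'T
    have hmem : Γ t' ∈ f ⁻¹' U := by
      show f (Γ t') ∈ U
      rw [hΓf t' ⟨ht'I.1, le_rfl⟩]
      apply hε
      refine ⟨Metric.mem_ball.2 ?_, ht'I⟩
      rw [Real.dist_eq, abs_lt]
      constructor <;> linarith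
    exact hI ⟨(H ⟨Γ t', hmem⟩).2⟩
  set e := ec.toTrivialization with he
  have hb : γ u ∈ e.baseSet := ec.mem_toTrivialization_baseSet
  have hnhds : γ ⁻¹' e.baseSet ∈ 𝓝[Icc (0:ℝ) 1] u :=
    (hγ u huI) (e.open_baseSet.mem_nhds hb)
  obtain ⟨ε, hεpos, hε⟩ := Metric.mem_nhdsWithin_iff.mp hnhds
  obtain ⟨t', ht'T, ht'gt⟩ := exists_lt_of_lt_csSup hne (by linarith : u - ε < u)
  have ht'le : t' ≤ u := le_csSup hbdd ht'T
  obtain ⟨ht'I, Γ, hΓc, hΓ0, hΓf⟩ := ht'T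
  -- key extension claim
  have key : ∀ v ∈ Icc (0:ℝ) 1, v < u + ε → v ∈ T := by
    intro v hvI hvlt
    rcases le_or_gt v t' with hvt | hvt
    · exact ⟨hvI, Γ, hΓc.mono (Icc_subset_Icc_right hvt), hΓ0,
        fun w hw => hΓf w (Icc_subset_Icc_right hvt hw)⟩
    · have hγt' : f (Γ t') = γ t' := hΓf t' ⟨ht'I.1, le_refl t'⟩
      have hball : ∀ w : ℝ, t' ≤ w → w ≤ v → w ∈ Icc (0:ℝ) 1 → γ w ∈ e.baseSet := by
        intro w h1 h2 hwI
        apply hε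
        refine ⟨Metric.mem_ball.2 ?_, hwI⟩
        rw [Real.dist_eq, abs_lt]
        constructor <;> nlinarith
      have ht'b : γ t' ∈ e.baseSet := hball t' le_rfl (le_of_lt hvt) ht'I
      set c := (e (Γ t')).2 with hc
      set σ : X → E := fun x => e.toOpenPartialHomeomorph.symm (x, c) with hσ
      have hmemt : ∀ x ∈ e.baseSet, ((x, c) : X × _) ∈ e.target := fun x hx => e.mem_target.2 hx
      have hσcont : ContinuousOn σ e.baseSet := by
        apply e.toOpenPartialHomeomorph.continuousOn_symm.comp
          ((continuous_id.prodMk continuous_const).continuousOn)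
        intro x hx
        exact hmemt x hx
      have hσproj : ∀ x ∈ e.baseSet, f (σ x) = x := fun x hx => e.proj_symm_apply (hmemt x hx)
      have hsrc : Γ t' ∈ e.source := e.mem_source.2 (by rw [hγt']; exact ht'b)
      have hσt' : σ (γ t') = Γ t' := by
        have h1 : ((γ t', c) : X × _) = e (Γ t') := by
          rw [← hγt']; exact e.mk_proj_snd hsrc
        rw [hσ]; simp only []
        rw [h1]
        exact e.toOpenPartialHomeomorph.left_inv hsrc
      set Γ₂ : ℝ → E := fun t => if t ≤ t' then Γ (min t t') else σ (γ (max t t')) with hΓ₂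
      have hc1 : ContinuousOn (fun t : ℝ => Γ (min t t')) (Icc 0 v) := by
        apply hΓc.comp ((continuous_id.min continuous_const).continuousOn)
        intro w hw
        exact ⟨le_min hw.1 ht'I.1, min_le_right _ _⟩
      have hc2 : ContinuousOn (fun t : ℝ => σ (γ (max t t'))) (Icc 0 v) := by
        apply hσcont.comp
        · apply hγ.comp ((continuous_id.max continuous_const).continuousOn)
          intro w hw
          exact ⟨le_trans ht'I.1 (le_max_right _ _),
            max_le (le_trans hw.2 hvI.2) (le_trans ht'le hu1)⟩
        · intro w hw
          exact hball _ (le_max_right _ _) (max_le hw.2 (le_of_lt hvt))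
            ⟨le_trans ht'I.1 (le_max_right _ _),
              max_le (le_trans hw.2 hvI.2) (le_trans ht'le hu1)⟩
      have hglue : ContinuousOn Γ₂ (Icc 0 v) := by
        rw [hΓ₂]
        apply ContinuousOn.if
        · intro a ha
          have hfr : frontier {a : ℝ | a ≤ t'} = {t'} := by
            have : {a : ℝ | a ≤ t'} = Iic t' := rfl
            rw [this, frontier_Iic]
          rw [hfr] at ha
          have : a = t' := ha.2
          subst this
          rw [min_self, max_self, hσt']
        · exact hc1.mono inter_subset_left
        · exact hc2.mono inter_subset_left
      refine ⟨hvI, Γ₂, hglue, ?_, ?_⟩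
      · have h0t' : (0:ℝ) ≤ t' := ht'I.1
        rw [hΓ₂]; simp only []
        rw [if_pos h0t', min_eq_left h0t', hΓ0]
      · intro w hw
        by_cases hwt : w ≤ t'
        · rw [hΓ₂]; simp only []
          rw [if_pos hwt, min_eq_left hwt]
          exact hΓf w ⟨hw.1, hwt⟩
        · push_neg at hwt
          rw [hΓ₂]; simp only []
          rw [if_neg (not_le.2 hwt), max_eq_left (le_of_lt hwt)]
          exact hσproj _ (hball w (le_of_lt hwt) hw.2 ⟨hw.1, le_trans hw.2 hvI.2⟩)
  have huT : u ∈ T := key u huI (by linarith)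
  have hueq : u = 1 := by
    by_contra hne1
    have hlt : u < 1 := lt_of_le_of_ne hu1 hne1
    set v := min 1 (u + ε / 2) with hv
    have hvT : v ∈ T := by
      apply key
      · exact ⟨le_min (by linarith) (by linarith), min_le_left _ _⟩
      · calc v ≤ u + ε / 2 := min_le_right _ _
          _ < u + ε := by linarith
    have h1 : v ≤ u := le_csSup hbdd hvT
    have h2 : u < v := lt_min hlt (by linarith)
    linarith
  rw [hueq] at huT
  obtain ⟨_, Γ', h1, h2, h3⟩ := huT
  exact ⟨Γ', h1, h2, h3⟩

open Set Topology Filter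

-- preconnected subset of a finite set is a subsingleton
theorem subsingleton_of_finite_preconnected {α : Type*} [TopologicalSpace α] [T1Space α]
    {S G : Set α} (hS : IsPreconnected S) (hG : G.Finite) (hsub : S ⊆ G) :
    S.Subsingleton := by
  intro a ha b hb
  by_contra hab
  have h1 : IsClosed ({a} : Set α) := isClosed_singleton
  have h2 : IsClosed (G \ {a}) := hG.diff.isClosed
  have hcover : S ⊆ {a} ∪ (G \ {a}) := by
    intro y hy
    by_cases hya : y = a
    · exact Or.inl hya
    · exact Or.inr ⟨hsub hy, hya⟩
  have hna : (S ∩ {a}).Nonempty := ⟨a, ha, rfl⟩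
  have hnb : (S ∩ (G \ {a})).Nonempty := ⟨b, hb, hsub hb, fun h => hab (h ▸ rfl)⟩
  obtain ⟨z, _, hz1, hz2⟩ := (isPreconnected_closed_iff.mp hS) _ _ h1 h2 hcover hna hnb
  exact hz2.2 hz1

-- intersection of a decreasing sequence of compact preconnected sets is preconnected
theorem isPreconnected_iInter_antitone {α : Type*} [TopologicalSpace α] [T2Space α]
    {K : ℕ → Set α} (hanti : ∀ n, K (n + 1) ⊆ K n) (hcpt : ∀ n, IsCompact (K n))
    (hconn : ∀ n, IsPreconnected (K n)) : IsPreconnected (⋂ n, K n) := by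
  set L := ⋂ n, K n with hL
  intro U V hU hV hcov ⟨yU, hyUL, hyUU⟩ ⟨yV, hyVL, hyVV⟩
  by_contra hcon
  have hLUV : L ∩ (U ∩ V) = ∅ := not_nonempty_iff_eq_empty.mp hcon
  have hcl : ∀ n, IsClosed (K n) := fun n => (hcpt n).isClosed
  have hLclosed : IsClosed L := isClosed_iInter hcl
  have hLcpt : IsCompact L := (hcpt 0).of_isClosed_subset hLclosed (iInter_subset _ 0)
  set A := L \ V with hA
  set B := L \ U with hB
  have hAcpt : IsCompact A := hLcpt.diff hV
  have hBcpt : IsCompact B := hLcpt.diff hU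
  have hdisj : Disjoint A B := by
    rw [Set.disjoint_left]
    rintro z ⟨hzL, hzV⟩ ⟨_, hzU⟩
    rcases hcov hzL with h | h
    exacts [hzU h, hzV h]
  have hAne : A.Nonempty := by
    refine ⟨yU, hyUL, fun hyV => ?_⟩
    have : yU ∈ L ∩ (U ∩ V) := ⟨hyUL, hyUU, hyV⟩
    rw [hLUV] at this; exact this
  have hBne : B.Nonempty := by
    refine ⟨yV, hyVL, fun hyU => ?_⟩
    have : yV ∈ L ∩ (U ∩ V) := ⟨hyVL, hyU, hyVV⟩
    rw [hLUV] at this; exact this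
  obtain ⟨U', V', hU', hV', hAU', hBV', hUV'⟩ := SeparatedNhds.of_isCompact_isCompact hAcpt hBcpt hdisj
  have hLsub : L ⊆ U' ∪ V' := by
    intro z hz
    by_cases hzV : z ∈ V
    · by_cases hzU : z ∈ U
      · exfalso
        have : z ∈ L ∩ (U ∩ V) := ⟨hz, hzU, hzV⟩
        rw [hLUV] at this; exact this
      · exact Or.inr (hBV' ⟨hz, hzU⟩)
    · exact Or.inl (hAU' ⟨hz, hzV⟩)
  -- some K N is inside U' ∪ V'
  have hKanti : ∀ m n, m ≤ n → K n ⊆ K m := by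
    intro m n hmn
    induction n with
    | zero => simp_all
    | succ k ih =>
      rcases Nat.lt_or_ge m (k+1) with h | h
      · exact (hanti k).trans (ih (Nat.lt_succ_iff.mp h))
      · have : m = k + 1 := le_antisymm hmn h
        rw [this]
  have hex : ∃ N, K N ⊆ U' ∪ V' := by
    by_contra hbad
    push_neg at hbad
    have hFne : ∀ n, (K n \ (U' ∪ V')).Nonempty := by
      intro n
      obtain ⟨z, hz1, hz2⟩ := not_subset.mp (fun h => (hbad n) h)
      exact ⟨z, hz1, hz2⟩
    have := IsCompact.nonempty_iInter_of_sequence_nonempty_isCompact_isClosed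
      (fun n => K n \ (U' ∪ V'))
      (fun n => diff_subset_diff_left (hanti n))
      hFne ((hcpt 0).diff (hU'.union hV'))
      (fun n => (hcl n).sdiff (hU'.union hV'))
    obtain ⟨z, hz⟩ := this
    have hz' : z ∈ L \ (U' ∪ V') := by
      constructor
      · exact mem_iInter.mpr fun n => (mem_iInter.mp hz n).1
      · exact (mem_iInter.mp hz 0).2
    exact hz'.2 (hLsub hz'.1)
  obtain ⟨N, hN⟩ := hex
  obtain ⟨a, haA⟩ := hAne
  obtain ⟨b, hbB⟩ := hBne
  have hKU' : (K N ∩ U').Nonempty := ⟨a, mem_iInter.mp haA.1 N, hAU' haA⟩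
  have hKV' : (K N ∩ V').Nonempty := ⟨b, mem_iInter.mp hbB.1 N, hBV' hbB⟩
  obtain ⟨z, _, hz1, hz2⟩ := hconn N U' V' hU' hV' hN hKU' hKV'
  exact (Set.disjoint_left.mp hUV') hz1 hz2
open Set Topology Filter


noncomputable section

theorem continuous_fmap (d : ℕ) (lam : Param d) : Continuous (fmap d lam) := by
  unfold fmap qpoly
  apply Continuous.prodMk
  · exact continuous_fst.pow d
  · apply Continuous.add
    · exact continuous_snd.pow d
    · apply continuous_finset_sum
      intro j _
      apply Continuous.mul
      · apply continuous_finset_sum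
        intro k _
        exact continuous_const.mul (continuous_fst.pow _)
      · exact continuous_snd.pow _

theorem fmap_fst (d : ℕ) (lam : Param d) (p : ℂ × ℂ) : (fmap d lam p).1 = p.1 ^ d := rfl

theorem MsetN_zero (d : ℕ) (lam : Param d) (R : ℝ) : MsetN d lam R 0 = Mset R := by
  simp [MsetN]

theorem MsetN_succ (d : ℕ) (lam : Param d) (R : ℝ) (n : ℕ) :
    MsetN d lam R (n + 1) = fmap d lam ⁻¹' MsetN d lam R n := by
  rw [MsetN, MsetN, Function.iterate_succ, Set.preimage_comp]

theorem MsetN_antitone (d : ℕ) (lam : Param d) (R : ℝ) (hadm : Admissible d lam R) (n : ℕ) :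
    MsetN d lam R (n + 1) ⊆ MsetN d lam R n :=
  subset_closure.trans (hadm.1 n).2

theorem MsetN_subset_Mset (d : ℕ) (lam : Param d) (R : ℝ) (hadm : Admissible d lam R) (n : ℕ) :
    MsetN d lam R n ⊆ Mset R := by
  induction n with
  | zero => rw [MsetN_zero]
  | succ k ih => exact (MsetN_antitone d lam R hadm k).trans ih

theorem mem_Mset_abs_fst {R : ℝ} {p : ℂ × ℂ} (hp : p ∈ Mset R) : ‖p.1‖ = 1 := hp.1

theorem Pn (d : ℕ) (hd : 2 ≤ d) (R : ℝ) (lam : Param d) (hadm : Admissible d lam R) :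
    ∀ n : ℕ, ∀ y ∈ MsetN d lam R n, ∀ γ : ℝ → ℂ, ContinuousOn γ (Icc 0 1) →
      (∀ t ∈ Icc (0:ℝ) 1, ‖γ t‖ = 1) → γ 0 = y.1 →
      ∃ δ : ℝ → ℂ × ℂ, ContinuousOn δ (Icc 0 1) ∧ δ 0 = y ∧
        ∀ t ∈ Icc (0:ℝ) 1, δ t ∈ MsetN d lam R n ∧ (δ t).1 = γ t := by
  intro n
  induction n with
  | zero =>
    intro y hy γ hγc hγ1 hγ0
    rw [MsetN_zero] at hy
    refine ⟨fun t => (γ t, y.2), hγc.prodMk continuousOn_const, ?_, ?_⟩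
    · show (γ 0, y.2) = y
      rw [hγ0]
    · intro t ht
      rw [MsetN_zero]
      exact ⟨⟨hγ1 t ht, hy.2⟩, rfl⟩
  | succ n ih =>
    intro y hy γ hγc hγ1 hγ0
    have hyM : y ∈ Mset R := MsetN_subset_Mset d lam R hadm (n + 1) hy
    have hy1 : ‖y.1‖ = 1 := hyM.1
    have hy1ne : y.1 ≠ 0 := by
      intro h
      rw [h, norm_zero] at hy1
      exact zero_ne_one hy1
    have hfy : fmap d lam y ∈ MsetN d lam R n := by
      rw [MsetN_succ] at hy
      exact hy
    obtain ⟨δ, hδc, hδ0, hδ⟩ := ih (fmap d lam y) hfy (fun t => γ t ^ d)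
      (hγc.pow d) (fun t ht => by rw [norm_pow, hγ1 t ht, one_pow])
      (by show γ 0 ^ d = (fmap d lam y).1; rw [hγ0]; rfl)
    have hδs : ∀ t ∈ Icc (0:ℝ) 1, δ t ∈ Mset R := fun t ht =>
      MsetN_subset_Mset d lam R hadm n (hδ t ht).1
    obtain ⟨Γ, hΓc, hΓ0, hΓf⟩ := liftOn_Icc hadm.2.1.1 hδc hδs y (by rw [hδ0])
    have hΓM : ∀ t ∈ Icc (0:ℝ) 1, Γ t ∈ MsetN d lam R (n + 1) := by
      intro t ht
      rw [MsetN_succ]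
      refine Set.mem_preimage.2 ?_
      rw [hΓf t ht]
      exact (hδ t ht).1
    have hγne : ∀ t ∈ Icc (0:ℝ) 1, γ t ≠ 0 := by
      intro t ht h
      have := hγ1 t ht
      rw [h, norm_zero] at this
      exact zero_ne_one this
    have hfst : ∀ t ∈ Icc (0:ℝ) 1, (Γ t).1 = γ t := by
      set h : ℝ → ℂ := fun t => (Γ t).1 / γ t with hh
      have hhc : ContinuousOn h (Icc 0 1) :=
        (continuous_fst.comp_continuousOn hΓc).div hγc hγne
      have hpow : ∀ t ∈ Icc (0:ℝ) 1, h t ^ d = 1 := by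
        intro t ht
        have h1 : (Γ t).1 ^ d = γ t ^ d := by
          have h2 := congrArg Prod.fst (hΓf t ht)
          rw [fmap_fst] at h2
          rw [h2, (hδ t ht).2]
        rw [hh]
        simp only []
        rw [div_pow, h1, div_self (pow_ne_zero d (hγne t ht))]
      have hd0 : 0 < d := lt_of_lt_of_le two_pos hd
      have hfin : ({w : ℂ | w ^ d = 1}).Finite := by
        apply Set.Finite.subset (Polynomial.nthRoots d (1:ℂ)).toFinset.finite_toSet
        intro w hw
        rw [Finset.mem_coe, Multiset.mem_toFinset, Polynomial.mem_nthRoots hd0]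
        exact hw
      have hsub := subsingleton_of_finite_preconnected
        (isPreconnected_Icc.image h hhc) hfin
        (by rintro _ ⟨t, ht, rfl⟩; exact hpow t ht)
      have h01 : h 0 = 1 := by
        rw [hh]
        simp only []
        rw [hΓ0, hγ0, div_self hy1ne]
      intro t ht
      have heq : h t = h 0 := hsub (mem_image_of_mem h ht)
        (mem_image_of_mem h ⟨le_rfl, zero_le_one⟩)
      rw [h01] at heq
      have := (div_eq_one_iff_eq (hγne t ht)).mp heq
      exact this
    exact ⟨Γ, hΓc, hΓ0, fun t ht => ⟨hΓM t ht, hfst t ht⟩⟩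

theorem isCompact_connectedComponentIn {α : Type*} [TopologicalSpace α] [T2Space α]
    {s : Set α} (hs : IsCompact s) (x : α) : IsCompact (connectedComponentIn s x) := by
  by_cases hx : x ∈ s
  · rw [connectedComponentIn_eq_image hx]
    haveI : CompactSpace s := isCompact_iff_compactSpace.mp hs
    exact isClosed_connectedComponent.isCompact.image continuous_subtype_val
  · rw [connectedComponentIn_eq_empty hx]
    exact isCompact_empty


/-- for an admissible parameter, the connected component of a point of
`J = ⋂ 𝓜_n` is the intersection of its components in the `𝓜_n`, and it projects onto
the whole circle `S¹`. -/
theorem component_eq_inter_and_projects_onto_circle (d : ℕ) (hd : 2 ≤ d) (R : ℝ)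
    (hR : 0 < R) (lam : Param d) (hadm : Admissible d lam R) :
    ∀ x ∈ ⋂ n : ℕ, MsetN d lam R n,
      connectedComponentIn (⋂ n : ℕ, MsetN d lam R n) x =
        (⋂ n : ℕ, connectedComponentIn (MsetN d lam R n) x) ∧
      Prod.fst '' connectedComponentIn (⋂ n : ℕ, MsetN d lam R n) x =
        {z : ℂ | ‖z‖ = 1} := by
  intro x hx
  have hxM : ∀ n, x ∈ MsetN d lam R n := fun n => Set.mem_iInter.mp hx n
  set C : ℕ → Set (ℂ × ℂ) := fun n => connectedComponentIn (MsetN d lam R n) x with hC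
  set K : ℕ → Set (ℂ × ℂ) := fun n =>
    connectedComponentIn (closure (MsetN d lam R (n + 1))) x with hK
  have hKcpt : ∀ n, IsCompact (K n) := fun n =>
    isCompact_connectedComponentIn (hadm.1 n).1 x
  have hKconn : ∀ n, IsPreconnected (K n) := fun n => isPreconnected_connectedComponentIn
  have hKanti : ∀ n, K (n + 1) ⊆ K n := fun n =>
    connectedComponentIn_mono x ((hadm.1 (n + 1)).2.trans subset_closure)
  have hKC : ∀ n, K n ⊆ C n := fun n => connectedComponentIn_mono x (hadm.1 n).2
  have hCK : ∀ n, C (n + 1) ⊆ K n := fun n => connectedComponentIn_mono x subset_closure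
  have hKCeq : (⋂ n, K n) = ⋂ n, C n := by
    apply subset_antisymm
    · exact Set.subset_iInter fun n => (Set.iInter_subset K n).trans (hKC n)
    · exact Set.subset_iInter fun n => (Set.iInter_subset C (n + 1)).trans (hCK n)
  have hICconn : IsPreconnected (⋂ n, C n) :=
    hKCeq ▸ isPreconnected_iInter_antitone hKanti hKcpt hKconn
  have hxIC : x ∈ ⋂ n, C n := Set.mem_iInter.2 fun n => mem_connectedComponentIn (hxM n)
  have hICJ : (⋂ n, C n) ⊆ ⋂ n, MsetN d lam R n :=
    Set.iInter_mono fun n => connectedComponentIn_subset _ _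
  have hpart1 : connectedComponentIn (⋂ n, MsetN d lam R n) x = ⋂ n, C n := by
    apply subset_antisymm
    · exact Set.subset_iInter fun n => connectedComponentIn_mono x (Set.iInter_subset _ n)
    · exact hICconn.subset_connectedComponentIn hxIC hICJ
  refine ⟨hpart1, ?_⟩
  apply subset_antisymm
  · rintro _ ⟨p, hp, rfl⟩
    have hpJ : p ∈ ⋂ n, MsetN d lam R n := connectedComponentIn_subset _ _ hp
    have hp0 : p ∈ Mset R := by
      have := Set.mem_iInter.mp hpJ 0
      rwa [MsetN_zero] at this
    exact hp0.1
  · intro z hz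
    have hz1 : ‖z‖ = 1 := hz
    have hx1 : ‖x.1‖ = 1 := (MsetN_subset_Mset d lam R hadm 0 (hxM 0)).1
    set γ : ℝ → ℂ := fun t =>
      Complex.exp ((((1 - t) * Complex.arg x.1 + t * Complex.arg z : ℝ) : ℂ) * Complex.I)
      with hγ
    have hγc : ContinuousOn γ (Icc 0 1) := by
      apply Continuous.continuousOn
      apply Complex.continuous_exp.comp
      apply Continuous.mul _ continuous_const
      apply Complex.continuous_ofReal.comp
      continuity
    have hγ1 : ∀ t ∈ Icc (0:ℝ) 1, ‖γ t‖ = 1 := fun t _ =>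
      Complex.norm_exp_ofReal_mul_I _
    have hγ0 : γ 0 = x.1 := by
      rw [hγ]
      simp only [sub_zero, one_mul, zero_mul, add_zero]
      have h := Complex.norm_mul_exp_arg_mul_I x.1
      rw [hx1, Complex.ofReal_one, one_mul] at h
      exact h
    have hγend : γ 1 = z := by
      rw [hγ]
      simp only [sub_self, zero_mul, one_mul, zero_add]
      have h := Complex.norm_mul_exp_arg_mul_I z
      rw [hz1, Complex.ofReal_one, one_mul] at h
      exact h
    have hmem : ∀ n, ∃ p ∈ K n, p.1 = z := by
      intro n
      obtain ⟨δ, hδc, hδ0, hδ⟩ :=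
        Pn d hd R lam hadm (n + 1) x (hxM (n + 1)) γ hγc hγ1 hγ0
      have himg : δ '' Icc 0 1 ⊆ C (n + 1) := by
        apply IsPreconnected.subset_connectedComponentIn (isPreconnected_Icc.image δ hδc)
        · exact ⟨0, ⟨le_rfl, zero_le_one⟩, hδ0⟩
        · rintro _ ⟨t, ht, rfl⟩
          exact (hδ t ht).1
      refine ⟨δ 1, hCK n (himg ⟨1, ⟨zero_le_one, le_rfl⟩, rfl⟩), ?_⟩
      rw [(hδ 1 ⟨zero_le_one, le_rfl⟩).2, hγend]
    set N : ℕ → Set (ℂ × ℂ) := fun n => K n ∩ Prod.fst ⁻¹' {z} with hN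
    have hNne : ∀ n, (N n).Nonempty := by
      intro n
      obtain ⟨p, h1, h2⟩ := hmem n
      exact ⟨p, h1, h2⟩
    have hNcl : ∀ n, IsClosed (N n) := fun n =>
      (hKcpt n).isClosed.inter (isClosed_singleton.preimage continuous_fst)
    have hNanti : ∀ n, N (n + 1) ⊆ N n := fun n =>
      Set.inter_subset_inter_left _ (hKanti n)
    obtain ⟨p, hp⟩ := IsCompact.nonempty_iInter_of_sequence_nonempty_isCompact_isClosed
      N hNanti hNne ((hKcpt 0).inter_right (isClosed_singleton.preimage continuous_fst)) hNcl
    have hpK : p ∈ ⋂ n, K n := Set.mem_iInter.2 fun n => (Set.mem_iInter.mp hp n).1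
    have hpz : p.1 = z := (Set.mem_iInter.mp hp 0).2
    refine ⟨p, ?_, hpz⟩
    rw [hpart1, ← hKCeq]
    exact hpK
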